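/- Let F be the Minkowskian product of Finsler metrics F₁ and F₂ with respect to a product function f. Then at every point (x,y) = ((x₁,x₂),(y₁,y₂)) with y₁ ≠ 0 and y₂ ≠ 0, the Cartan nonlinear connection coefficients Γ^α_β = ∂𝔾^α/∂y^β of F satisfy: Γ^i_j(x,y) = Γ₁^i_j(x₁,y₁), Γ^{i'}_{j'}(x,y) = Γ₂^{i'}_{j'}(x₂,y₂), and Γ^{i'}_j(x,y) = Γ^i_{j'}(x,y) = 0, where Γ₁ and Γ₂ are the nonlinear connection coefficients of F₁ and F₂. -/

import Mathlib

open Matrix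

/-- Partial derivative in the fiber variable `y` in the direction of the `α`-th
coordinate, for a function `g (x, y)` of a base point and a fiber vector. -/
noncomputable def pdy {ι : Type*} [Fintype ι] [DecidableEq ι]
    (g : (ι → ℝ) → (ι → ℝ) → ℝ) (α : ι) : (ι → ℝ) → (ι → ℝ) → ℝ :=
  fun x y => fderiv ℝ (g x) y (Pi.single α 1)

/-- Partial derivative in the base variable `x` in the direction of the `γ`-th
coordinate, for a function `g (x, y)` of a base point and a fiber vector. -/
noncomputable def pdx {ι : Type*} [Fintype ι] [DecidableEq ι]
    (g : (ι → ℝ) → (ι → ℝ) → ℝ) (γ : ι) : (ι → ℝ) → (ι → ℝ) → ℝ :=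
  fun x y => fderiv ℝ (fun x' => g x' y) x (Pi.single γ 1)

/-- The fundamental tensor `(G_{αβ}) = (∂²(F²)/∂y^α∂y^β)` of a Finsler metric `F`. -/
noncomputable def fundTensor {ι : Type*} [Fintype ι] [DecidableEq ι]
    (F : (ι → ℝ) → (ι → ℝ) → ℝ) (x y : ι → ℝ) : Matrix ι ι ℝ :=
  fun α β => pdy (pdy (fun x' y' => (F x' y') ^ 2) β) α x y

/-- `F` is a Finsler metric on the open set `U`: `G = F²` is smooth on the slit
domain, `F` is positive for `y ≠ 0`, absolutely 1-homogeneous in `y`, and its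
fundamental tensor is positive definite for `y ≠ 0`. -/
structure IsFinslerMetric {ι : Type*} [Fintype ι] [DecidableEq ι]
    (U : Set (ι → ℝ)) (F : (ι → ℝ) → (ι → ℝ) → ℝ) : Prop where
  isOpen : IsOpen U
  smooth : ContDiffOn ℝ (⊤ : ℕ∞) (fun p : (ι → ℝ) × (ι → ℝ) => (F p.1 p.2) ^ 2)
    (U ×ˢ {y | y ≠ 0})
  pos : ∀ x ∈ U, ∀ y : ι → ℝ, y ≠ 0 → 0 < F x y
  homog : ∀ x ∈ U, ∀ (y : ι → ℝ) (c : ℝ), F x (c • y) = |c| * F x y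
  posDef : ∀ x ∈ U, ∀ y : ι → ℝ, y ≠ 0 → (fundTensor F x y).PosDef

/-- The geodesic spray coefficients
`𝔾^α = ½ G^{αβ}(∂²G/∂y^β∂x^γ · y^γ − ∂G/∂x^β)` of a Finsler metric `F`. -/
noncomputable def spray {ι : Type*} [Fintype ι] [DecidableEq ι]
    (F : (ι → ℝ) → (ι → ℝ) → ℝ) (α : ι) : (ι → ℝ) → (ι → ℝ) → ℝ :=
  fun x y => (1 / 2) * ∑ β, (fundTensor F x y)⁻¹ α β *
    ((∑ γ, pdx (pdy (fun x' y' => (F x' y') ^ 2) β) γ x y * y γ) -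
      pdx (fun x' y' => (F x' y') ^ 2) β x y)

/-- The Cartan nonlinear connection coefficients `Γ^α_β = ∂𝔾^α/∂y^β`. -/
noncomputable def nonlinConn {ι : Type*} [Fintype ι] [DecidableEq ι]
    (F : (ι → ℝ) → (ι → ℝ) → ℝ) (α β : ι) : (ι → ℝ) → (ι → ℝ) → ℝ :=
  pdy (spray F α) β

/-- The Berwald connection coefficients `Γ̌^α_{β;γ} = ∂Γ^α_γ/∂y^β = ∂²𝔾^α/∂y^β∂y^γ`. -/
noncomputable def berwaldConn {ι : Type*} [Fintype ι] [DecidableEq ι]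
    (F : (ι → ℝ) → (ι → ℝ) → ℝ) (α β γ : ι) : (ι → ℝ) → (ι → ℝ) → ℝ :=
  pdy (nonlinConn F α γ) β

/-- The Berwald curvature `B^α_{βγη} = ∂³𝔾^α/∂y^β∂y^γ∂y^η`. -/
noncomputable def berwaldCurv {ι : Type*} [Fintype ι] [DecidableEq ι]
    (F : (ι → ℝ) → (ι → ℝ) → ℝ) (α β γ η : ι) : (ι → ℝ) → (ι → ℝ) → ℝ :=
  pdy (pdy (pdy (spray F α) η) γ) β

/-- The mean Berwald curvature `E_{βγ} = ½ B^α_{βγα}` (sum over `α`). -/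
noncomputable def meanBerwaldCurv {ι : Type*} [Fintype ι] [DecidableEq ι]
    (F : (ι → ℝ) → (ι → ℝ) → ℝ) (β γ : ι) : (ι → ℝ) → (ι → ℝ) → ℝ :=
  fun x y => (1 / 2) * ∑ α, berwaldCurv F α β γ α x y

/-- The Landsberg curvature `L_{βγη} = −¼ y^ν G_{να} B^α_{βγη}` (sums over `ν, α`). -/
noncomputable def landsbergCurv {ι : Type*} [Fintype ι] [DecidableEq ι]
    (F : (ι → ℝ) → (ι → ℝ) → ℝ) (β γ η : ι) : (ι → ℝ) → (ι → ℝ) → ℝ :=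
  fun x y => -(1 / 4) * ∑ ν, ∑ α, y ν * fundTensor F x y ν α * berwaldCurv F α β γ η x y

/-- The mean Landsberg curvature `J_α = 2 G^{βγ} L_{αβγ}` (sums over `β, γ`). -/
noncomputable def meanLandsbergCurv {ι : Type*} [Fintype ι] [DecidableEq ι]
    (F : (ι → ℝ) → (ι → ℝ) → ℝ) (α : ι) : (ι → ℝ) → (ι → ℝ) → ℝ :=
  fun x y => 2 * ∑ β, ∑ γ, (fundTensor F x y)⁻¹ β γ * landsbergCurv F α β γ x y

/-- Partial derivative of `f : ℝ → ℝ → ℝ` with respect to the first variable. -/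
noncomputable def pderivS (f : ℝ → ℝ → ℝ) (s t : ℝ) : ℝ := deriv (fun u => f u t) s

/-- Partial derivative of `f : ℝ → ℝ → ℝ` with respect to the second variable. -/
noncomputable def pderivT (f : ℝ → ℝ → ℝ) (s t : ℝ) : ℝ := deriv (fun v => f s v) t

/-- `f_st = ∂²f/∂s∂t`. -/
noncomputable def pderivST (f : ℝ → ℝ → ℝ) (s t : ℝ) : ℝ :=
  deriv (fun u => pderivT f u t) s

/-- The data of a Minkowskian product: `F₁, F₂` are Finsler metrics on `U₁, U₂`,
`f` is an admissible product function, and `F = √(f(F₁², F₂²))` is the Minkowskian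
product metric, itself assumed to be a Finsler metric on `U₁ × U₂`. -/
structure IsMinkowskianProduct {m n : ℕ}
    (U₁ : Set (Fin m → ℝ)) (U₂ : Set (Fin n → ℝ))
    (F₁ : (Fin m → ℝ) → (Fin m → ℝ) → ℝ) (F₂ : (Fin n → ℝ) → (Fin n → ℝ) → ℝ)
    (f : ℝ → ℝ → ℝ)
    (F : (Fin m ⊕ Fin n → ℝ) → (Fin m ⊕ Fin n → ℝ) → ℝ) : Prop where
  finsler₁ : IsFinslerMetric U₁ F₁
  finsler₂ : IsFinslerMetric U₂ F₂
  f_cont : ContinuousOn (fun p : ℝ × ℝ => f p.1 p.2) (Set.Ici 0 ×ˢ Set.Ici 0)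
  f_nonneg : ∀ s ∈ Set.Ici (0 : ℝ), ∀ t ∈ Set.Ici (0 : ℝ), 0 ≤ f s t
  f_zero_iff : ∀ s ∈ Set.Ici (0 : ℝ), ∀ t ∈ Set.Ici (0 : ℝ),
    (f s t = 0 ↔ s = 0 ∧ t = 0)
  f_homog : ∀ c ∈ Set.Ici (0 : ℝ), ∀ s ∈ Set.Ici (0 : ℝ), ∀ t ∈ Set.Ici (0 : ℝ),
    f (c * s) (c * t) = c * f s t
  f_smooth : ContDiffOn ℝ (⊤ : ℕ∞) (fun p : ℝ × ℝ => f p.1 p.2)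
    (Set.Ioi 0 ×ˢ Set.Ioi 0)
  fs_ne : ∀ s > (0 : ℝ), ∀ t > (0 : ℝ), pderivS f s t ≠ 0
  ft_ne : ∀ s > (0 : ℝ), ∀ t > (0 : ℝ), pderivT f s t ≠ 0
  delta_ne : ∀ s > (0 : ℝ), ∀ t > (0 : ℝ),
    pderivS f s t * pderivT f s t - 2 * f s t * pderivST f s t ≠ 0
  F_def : ∀ (x y : Fin m ⊕ Fin n → ℝ),
    F x y = Real.sqrt (f ((F₁ (x ∘ Sum.inl) (y ∘ Sum.inl)) ^ 2)
      ((F₂ (x ∘ Sum.inr) (y ∘ Sum.inr)) ^ 2))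
  finsler : IsFinslerMetric
    {x : Fin m ⊕ Fin n → ℝ | (x ∘ Sum.inl) ∈ U₁ ∧ (x ∘ Sum.inr) ∈ U₂} F

/-!
The spray of a Lagrangian `Λ(x, y)` with invertible fibre Hessian is characterised by the
Euler–Lagrange equations: `𝔾 = v / 2` exactly when `Y = (y, -v)` satisfies
`∂_y ∂_{(x,y)} Λ · Y = ∂_x Λ`. If moreover `Λ` is `2`-homogeneous in `y`, such a `Y` conserves
`Λ`, i.e. `dΛ · Y = 0`.

Let `v` be `(2𝔾₁, 2𝔾₂)`, the doubled sprays of the factors placed side by side. Then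
`Y = (y, -v)` solves the Euler–Lagrange equations of both `F₁²` and `F₂²` (pulled back to the
product) and conserves both. By the chain rule the Euler–Lagrange equations pass to
`F² = f(F₁², F₂²)`: the second derivatives of `f` only occur multiplied by `dF₁² · Y` or
`dF₂² · Y`, which vanish. Hence the spray of `F` is `(𝔾₁, 𝔾₂)` on the open set where both blocks
of `y` are nonzero, and the connection coefficients are its `y`-derivatives.
-/

open Topology

section Calculus

variable {E F : Type*} [NormedAddCommGroup E] [NormedSpace ℝ E] [NormedAddCommGroup F]
  [NormedSpace ℝ F]

lemma ContDiffAt.differentiableAt_fderiv {f : E → ℝ} {z : E} (hf : ContDiffAt ℝ 2 f z) :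
    DifferentiableAt ℝ (fderiv ℝ f) z :=
  (hf.fderiv_right (m := 1) le_rfl).differentiableAt one_ne_zero

lemma fderiv_fderiv_apply {f : E → ℝ} {z : E} (hf : DifferentiableAt ℝ (fderiv ℝ f) z) (v u : E) :
    fderiv ℝ (fderiv ℝ f) z v u = fderiv ℝ (fun z' => fderiv ℝ f z' u) z v := by
  rw [fderiv_clm_apply hf (differentiableAt_const u)]
  simp

lemma fderiv_comp_clm_apply {f : F → ℝ} (P : E →L[ℝ] F) {z : E}
    (hf : DifferentiableAt ℝ f (P z)) (u : E) :
    fderiv ℝ (f ∘ P) z u = fderiv ℝ f (P z) (P u) := by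
  rw [fderiv_comp z hf P.differentiableAt, P.fderiv]
  rfl

lemma fderiv_fderiv_comp_clm_apply {f : F → ℝ} (P : E →L[ℝ] F) {z : E}
    (hf : ContDiffAt ℝ 2 f (P z)) (v u : E) :
    fderiv ℝ (fderiv ℝ (f ∘ P)) z v u = fderiv ℝ (fderiv ℝ f) (P z) (P v) (P u) := by
  have hd2 : DifferentiableAt ℝ (fderiv ℝ f) (P z) := hf.differentiableAt_fderiv
  have hfirst : (fun z' => fderiv ℝ (f ∘ P) z' u) =ᶠ[𝓝 z]
      (fun r => fderiv ℝ f r (P u)) ∘ P := by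
    filter_upwards [P.continuous.continuousAt.eventually (hf.eventually (by simp))] with z' hz'
    exact fderiv_comp_clm_apply P (hz'.differentiableAt two_ne_zero) u
  have hcomp : ContDiffAt ℝ 2 (f ∘ P) z := hf.comp z P.contDiff.contDiffAt
  rw [fderiv_fderiv_apply hcomp.differentiableAt_fderiv,
    hfirst.fderiv_eq, fderiv_comp_clm_apply P (hd2.clm_apply (differentiableAt_const _)),
    fderiv_fderiv_apply hd2]

lemma fderiv_prodMk_left_apply {Λ : E × F → ℝ} {x : E} {y : F}
    (h : DifferentiableAt ℝ Λ (x, y)) (u : E) :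
    fderiv ℝ (fun x' => Λ (x', y)) x u = fderiv ℝ Λ (x, y) (u, 0) := by
  rw [HasFDerivAt.fderiv (f := fun x' => Λ (x', y))
    (h.hasFDerivAt.comp x (hasFDerivAt_prodMk_left x y))]
  rfl

lemma fderiv_prodMk_right_apply {Λ : E × F → ℝ} {x : E} {y : F}
    (h : DifferentiableAt ℝ Λ (x, y)) (u : F) :
    fderiv ℝ (fun y' => Λ (x, y')) y u = fderiv ℝ Λ (x, y) (0, u) := by
  rw [HasFDerivAt.fderiv (f := fun y' => Λ (x, y'))
    (h.hasFDerivAt.comp y (hasFDerivAt_prodMk_right x y))]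
  rfl

lemma fderiv_comp_prodMk_apply {φ : ℝ × ℝ → ℝ} {a b : E → ℝ} {z : E}
    (hφ : DifferentiableAt ℝ φ (a z, b z)) (ha : DifferentiableAt ℝ a z)
    (hb : DifferentiableAt ℝ b z) (u : E) :
    fderiv ℝ (fun z => φ (a z, b z)) z u =
      fderiv ℝ φ (a z, b z) (1, 0) * fderiv ℝ a z u
        + fderiv ℝ φ (a z, b z) (0, 1) * fderiv ℝ b z u := by
  have h : HasFDerivAt (fun z => φ (a z, b z))
      ((fderiv ℝ φ (a z, b z)).comp ((fderiv ℝ a z).prod (fderiv ℝ b z))) z :=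
    hφ.hasFDerivAt.comp z (ha.hasFDerivAt.prodMk hb.hasFDerivAt)
  have hsplit : (fderiv ℝ a z u, fderiv ℝ b z u)
      = fderiv ℝ a z u • ((1 : ℝ), (0 : ℝ)) + fderiv ℝ b z u • ((0 : ℝ), (1 : ℝ)) := by
    simp
  rw [h.fderiv, ContinuousLinearMap.comp_apply, ContinuousLinearMap.prod_apply, hsplit,
    map_add, map_smul, map_smul, smul_eq_mul, smul_eq_mul]
  ring

lemma fderiv_fderiv_comp_prodMk_apply {φ : ℝ × ℝ → ℝ} {a b : E → ℝ} {z : E}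
    (hφ : ContDiffAt ℝ 2 φ (a z, b z)) (ha : ContDiffAt ℝ 2 a z) (hb : ContDiffAt ℝ 2 b z)
    {u : E} (hau : fderiv ℝ a z u = 0) (hbu : fderiv ℝ b z u = 0) (v : E) :
    fderiv ℝ (fderiv ℝ fun z => φ (a z, b z)) z v u =
      fderiv ℝ φ (a z, b z) (1, 0) * fderiv ℝ (fderiv ℝ a) z v u
        + fderiv ℝ φ (a z, b z) (0, 1) * fderiv ℝ (fderiv ℝ b) z v u := by
  have hab : DifferentiableAt ℝ (fun z => (a z, b z)) z :=
    (ha.differentiableAt two_ne_zero).prodMk (hb.differentiableAt two_ne_zero)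
  have hfirst : (fun z' => fderiv ℝ (fun z => φ (a z, b z)) z' u) =ᶠ[𝓝 z]
      fun z' => fderiv ℝ φ (a z', b z') (1, 0) * fderiv ℝ a z' u
        + fderiv ℝ φ (a z', b z') (0, 1) * fderiv ℝ b z' u := by
    filter_upwards [hab.continuousAt.eventually (hφ.eventually (by simp)),
      ha.eventually (by simp), hb.eventually (by simp)] with z' hφz ha' hb'
    exact fderiv_comp_prodMk_apply (hφz.differentiableAt two_ne_zero)
      (ha'.differentiableAt two_ne_zero) (hb'.differentiableAt two_ne_zero) u
  have hcoef (e : ℝ × ℝ) : DifferentiableAt ℝ (fun z' => fderiv ℝ φ (a z', b z') e) z :=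
    (hφ.differentiableAt_fderiv.comp z hab).clm_apply (differentiableAt_const e)
  have hslope {c : E → ℝ} (hc : ContDiffAt ℝ 2 c z) :
      HasFDerivAt (fun z' => fderiv ℝ c z' u) ((fderiv ℝ (fderiv ℝ c) z).flip u) z := by
    simpa using hc.differentiableAt_fderiv.hasFDerivAt.clm_apply (hasFDerivAt_const u z)
  have h := (((hcoef (1, 0)).hasFDerivAt.mul (hslope ha)).add
    ((hcoef (0, 1)).hasFDerivAt.mul (hslope hb))).congr_of_eventuallyEq hfirst
  have hg : ContDiffAt ℝ 2 (fun z => φ (a z, b z)) z := hφ.comp z (ha.prodMk hb)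
  rw [fderiv_fderiv_apply hg.differentiableAt_fderiv, h.fderiv]
  simp [hau, hbu]

/-- Holds also where `g` is not differentiable, since then neither is `g ∘ P`. -/
lemma fderiv_comp_clm_of_surjective [FiniteDimensional ℝ F] {g : F → ℝ} (P : E →L[ℝ] F)
    (hP : Function.Surjective P) (y : E) : fderiv ℝ (g ∘ P) y = (fderiv ℝ g (P y)).comp P := by
  by_cases hg : DifferentiableAt ℝ g (P y)
  · rw [fderiv_comp y hg P.differentiableAt, P.fderiv]
  have hgP : ¬ DifferentiableAt ℝ (g ∘ P) y := by
    refine fun hgP => hg ?_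
    obtain ⟨S, hS⟩ := P.toLinearMap.exists_rightInverse_of_surjective
      (LinearMap.range_eq_top.2 hP)
    have hPS (z : F) : P (S z) = z := LinearMap.congr_fun hS z
    let T : F → E := fun z => S z + (y - S (P y))
    have hT : g = (g ∘ P) ∘ T := by
      funext z
      simp [T, hPS]
    have hTy : T (P y) = y := by simp [T]
    rw [hT]
    exact DifferentiableAt.comp _ (by rwa [hTy])
      ((LinearMap.toContinuousLinearMap S).differentiableAt.add_const _)
  rw [fderiv_zero_of_not_differentiableAt hg, fderiv_zero_of_not_differentiableAt hgP,
    ContinuousLinearMap.zero_comp]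

end Calculus

section EulerLagrange

variable {E F : Type*} [NormedAddCommGroup E] [NormedSpace ℝ E] [NormedAddCommGroup F]
  [NormedSpace ℝ F]

/-- `Y = (ẋ, ÿ)` solves the Euler–Lagrange equation `d/dt (∂Λ/∂y) = ∂Λ/∂x` of the Lagrangian
`Λ(x, y)` at `p = (x, y)`; the left side is the second derivative of `Λ` in the directions `Y` and
`(0, w)`. -/
def IsEulerLagrange (Λ : E × E → ℝ) (p Y : E × E) : Prop :=
  ∀ w : E, fderiv ℝ (fderiv ℝ Λ) p (0, w) Y = fderiv ℝ Λ p (w, 0)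

/-- Conservation of energy for a Lagrangian that is `2`-homogeneous in `y`. -/
lemma IsEulerLagrange.fderiv_apply_eq_zero {Λ : E × E → ℝ} {p : E × E} {a : E}
    (hΛ : ContDiffAt ℝ 2 Λ p) (hhom : ∀ᶠ q in 𝓝 p, fderiv ℝ Λ q (0, q.2) = 2 * Λ q)
    (h : IsEulerLagrange Λ p (p.2, a)) :
    fderiv ℝ Λ p (p.2, a) = 0 := by
  have hEuler : HasFDerivAt (fun q => fderiv ℝ Λ q (0, q.2))
      ((fderiv ℝ Λ p).comp ((0 : E × E →L[ℝ] E).prod (ContinuousLinearMap.snd ℝ E E))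
        + (fderiv ℝ (fderiv ℝ Λ) p).flip (0, p.2)) p :=
    hΛ.differentiableAt_fderiv.hasFDerivAt.clm_apply
      ((hasFDerivAt_const 0 p).prodMk hasFDerivAt_snd)
  have hdiff := hEuler.unique
    (((hΛ.differentiableAt two_ne_zero).hasFDerivAt.const_mul 2).congr_of_eventuallyEq hhom)
  have hY := congrArg (fun L => L (p.2, a)) hdiff
  have hsymm := (hΛ.isSymmSndFDerivAt (by simp)).eq (p.2, a) (0, p.2)
  have hsplit : fderiv ℝ Λ p (p.2, a) = fderiv ℝ Λ p (p.2, 0) + fderiv ℝ Λ p (0, a) := by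
    rw [← map_add, Prod.mk_add_mk, add_zero, zero_add]
  simp only [_root_.add_apply, ContinuousLinearMap.coe_comp, Function.comp_apply,
    ContinuousLinearMap.prod_apply, _root_.zero_apply,
    ContinuousLinearMap.coe_snd', ContinuousLinearMap.flip_apply, hsymm, h p.2,
    _root_.smul_apply, smul_eq_mul] at hY
  linarith

lemma IsEulerLagrange.comp_prodMap {Λ : F × F → ℝ} (P : E →L[ℝ] F) {p Y : E × E}
    (hΛ : ContDiffAt ℝ 2 Λ (P.prodMap P p))
    (h : IsEulerLagrange Λ (P.prodMap P p) (P.prodMap P Y)) :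
    IsEulerLagrange (Λ ∘ P.prodMap P) p Y := by
  intro w
  rw [fderiv_fderiv_comp_clm_apply _ hΛ,
    fderiv_comp_clm_apply _ (hΛ.differentiableAt two_ne_zero)]
  simpa using h (P w)

lemma IsEulerLagrange.comp_prodMk {φ : ℝ × ℝ → ℝ} {a b : E × E → ℝ} {p Y : E × E}
    (hφ : ContDiffAt ℝ 2 φ (a p, b p)) (ha : ContDiffAt ℝ 2 a p) (hb : ContDiffAt ℝ 2 b p)
    (hELa : IsEulerLagrange a p Y) (hELb : IsEulerLagrange b p Y)
    (hYa : fderiv ℝ a p Y = 0) (hYb : fderiv ℝ b p Y = 0) :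
    IsEulerLagrange (fun q => φ (a q, b q)) p Y := by
  intro w
  rw [fderiv_fderiv_comp_prodMk_apply hφ ha hb hYa hYb, hELa w, hELb w,
    fderiv_comp_prodMk_apply (hφ.differentiableAt two_ne_zero)
      (ha.differentiableAt two_ne_zero) (hb.differentiableAt two_ne_zero)]

end EulerLagrange

section Coordinates

variable {ι : Type*} [Fintype ι] [DecidableEq ι]

lemma map_eq_sum_mul_single {M : Type*} [FunLike M (ι → ℝ) ℝ] [LinearMapClass M ℝ (ι → ℝ) ℝ]
    (ℓ : M) (w : ι → ℝ) : ℓ w = ∑ i, w i * ℓ (Pi.single i 1) := by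
  conv_lhs => rw [pi_eq_sum_univ' w]
  simp [map_sum, map_smul]

variable {L : (ι → ℝ) → (ι → ℝ) → ℝ} {x y : ι → ℝ}

lemma pdy_eq_fderiv (hL : DifferentiableAt ℝ (fun q : (ι → ℝ) × (ι → ℝ) => L q.1 q.2) (x, y))
    (β : ι) :
    pdy L β x y = fderiv ℝ (fun q : (ι → ℝ) × (ι → ℝ) => L q.1 q.2) (x, y) (0, Pi.single β 1) :=
  fderiv_prodMk_right_apply hL _

lemma pdx_eq_fderiv (hL : DifferentiableAt ℝ (fun q : (ι → ℝ) × (ι → ℝ) => L q.1 q.2) (x, y))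
    (γ : ι) :
    pdx L γ x y = fderiv ℝ (fun q : (ι → ℝ) × (ι → ℝ) => L q.1 q.2) (x, y) (Pi.single γ 1, 0) :=
  fderiv_prodMk_left_apply hL _

lemma pdy_pdy_eq_fderiv_fderiv
    (hL : ContDiffAt ℝ 2 (fun q : (ι → ℝ) × (ι → ℝ) => L q.1 q.2) (x, y)) (α β : ι) :
    pdy (pdy L β) α x y = fderiv ℝ (fderiv ℝ fun q : (ι → ℝ) × (ι → ℝ) => L q.1 q.2) (x, y)
      (0, Pi.single α 1) (0, Pi.single β 1) := by
  have hd2 := hL.differentiableAt_fderiv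
  have hpdy : (fun y' => pdy L β x y') =ᶠ[𝓝 y]
      fun y' => fderiv ℝ (fun q : (ι → ℝ) × (ι → ℝ) => L q.1 q.2) (x, y') (0, Pi.single β 1) := by
    filter_upwards [(Continuous.prodMk_right x).continuousAt.eventually
      (hL.eventually (by simp))] with y' hy'
    exact pdy_eq_fderiv (hy'.differentiableAt two_ne_zero) β
  change fderiv ℝ (fun y' => pdy L β x y') y (Pi.single α 1) = _
  rw [hpdy.fderiv_eq, fderiv_prodMk_right_apply (hd2.clm_apply (differentiableAt_const _)),
    fderiv_fderiv_apply hd2]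

lemma pdx_pdy_eq_fderiv_fderiv
    (hL : ContDiffAt ℝ 2 (fun q : (ι → ℝ) × (ι → ℝ) => L q.1 q.2) (x, y)) (γ β : ι) :
    pdx (pdy L β) γ x y = fderiv ℝ (fderiv ℝ fun q : (ι → ℝ) × (ι → ℝ) => L q.1 q.2) (x, y)
      (Pi.single γ 1, 0) (0, Pi.single β 1) := by
  have hd2 := hL.differentiableAt_fderiv
  have hpdy : (fun x' => pdy L β x' y) =ᶠ[𝓝 x]
      fun x' => fderiv ℝ (fun q : (ι → ℝ) × (ι → ℝ) => L q.1 q.2) (x', y) (0, Pi.single β 1) := by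
    filter_upwards [(Continuous.prodMk_left y).continuousAt.eventually
      (hL.eventually (by simp))] with x' hx'
    exact pdy_eq_fderiv (hx'.differentiableAt two_ne_zero) β
  change fderiv ℝ (fun x' => pdy L β x' y) x (Pi.single γ 1) = _
  rw [hpdy.fderiv_eq, fderiv_prodMk_left_apply (hd2.clm_apply (differentiableAt_const _)),
    fderiv_fderiv_apply hd2]

end Coordinates

section Spray

variable {ι : Type*} [Fintype ι] [DecidableEq ι] {F : (ι → ℝ) → (ι → ℝ) → ℝ} {x y : ι → ℝ}

lemma isEulerLagrange_iff_fundTensor_mulVec {v : ι → ℝ}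
    (hF : ContDiffAt ℝ 2 (fun q : (ι → ℝ) × (ι → ℝ) => F q.1 q.2 ^ 2) (x, y)) :
    IsEulerLagrange (fun q : (ι → ℝ) × (ι → ℝ) => F q.1 q.2 ^ 2) (x, y) (y, -v) ↔
      fundTensor F x y *ᵥ v = fun β => (∑ γ, pdx (pdy (fun x' y' => F x' y' ^ 2) β) γ x y * y γ)
        - pdx (fun x' y' => F x' y' ^ 2) β x y := by
  set Λ := fun q : (ι → ℝ) × (ι → ℝ) => F q.1 q.2 ^ 2
  set H := fderiv ℝ (fderiv ℝ Λ) (x, y)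
  have hd := hF.differentiableAt two_ne_zero
  have hsum_inl (ℓ : (ι → ℝ) × (ι → ℝ) →L[ℝ] ℝ) (w : ι → ℝ) :
      ℓ (w, 0) = ∑ i, w i * ℓ (Pi.single i 1, 0) :=
    map_eq_sum_mul_single (ℓ.comp (ContinuousLinearMap.inl ℝ _ _)) w
  have hsum_inr (ℓ : (ι → ℝ) × (ι → ℝ) →L[ℝ] ℝ) (w : ι → ℝ) :
      ℓ (0, w) = ∑ i, w i * ℓ (0, Pi.single i 1) :=
    map_eq_sum_mul_single (ℓ.comp (ContinuousLinearMap.inr ℝ _ _)) w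
  have hg (α : ι) : (fundTensor F x y *ᵥ v) α = H (0, Pi.single α 1) (0, v) := by
    rw [hsum_inr]
    simp [Matrix.mulVec, dotProduct, fundTensor,
      pdy_pdy_eq_fderiv_fderiv (L := fun x' y' => F x' y' ^ 2) hF, H, Λ, mul_comm]
  have hD (α : ι) : (∑ γ, pdx (pdy (fun x' y' => F x' y' ^ 2) α) γ x y * y γ)
      - pdx (fun x' y' => F x' y' ^ 2) α x y
        = H (0, Pi.single α 1) (y, 0) - fderiv ℝ Λ (x, y) (Pi.single α 1, 0) := by
    rw [(hF.isSymmSndFDerivAt (by simp)).eq,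
      show H (y, 0) (0, Pi.single α 1) = H.flip (0, Pi.single α 1) (y, 0) from rfl, hsum_inl]
    simp [pdx_pdy_eq_fderiv_fderiv (L := fun x' y' => F x' y' ^ 2) hF,
      pdx_eq_fderiv (L := fun x' y' => F x' y' ^ 2) hd, H, Λ, mul_comm]
  have hsplit (w : ι → ℝ) : H (0, w) (y, -v) = H (0, w) (y, 0) - H (0, w) (0, v) := by
    rw [← map_sub, Prod.mk_sub_mk, sub_zero, zero_sub]
  constructor
  · intro h
    funext α
    rw [hg, hD]
    linarith [h (Pi.single α 1), hsplit (Pi.single α 1)]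
  · intro h w
    have hα (α : ι) : H (0, Pi.single α 1) (y, -v) = fderiv ℝ Λ (x, y) (Pi.single α 1, 0) := by
      linarith [congrFun h α, hg α, hD α, hsplit (Pi.single α 1)]
    change H.flip (y, -v) (0, w) = _
    rw [hsum_inl, hsum_inr]
    simp [hα]

lemma spray_eq_of_isEulerLagrange {v : ι → ℝ} (hdet : IsUnit (fundTensor F x y).det)
    (hF : ContDiffAt ℝ 2 (fun q : (ι → ℝ) × (ι → ℝ) => F q.1 q.2 ^ 2) (x, y))
    (h : IsEulerLagrange (fun q : (ι → ℝ) × (ι → ℝ) => F q.1 q.2 ^ 2) (x, y) (y, -v)) (α : ι) :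
    spray F α x y = v α / 2 := by
  have hv := (isEulerLagrange_iff_fundTensor_mulVec hF).1 h
  have hsolve := congrArg (fun D => ((fundTensor F x y)⁻¹ *ᵥ D) α) hv
  simp only [Matrix.mulVec_mulVec, Matrix.nonsing_inv_mul _ hdet, Matrix.one_mulVec] at hsolve
  rw [hsolve]
  simp only [spray, Matrix.mulVec, dotProduct]
  ring

lemma isEulerLagrange_spray (hdet : IsUnit (fundTensor F x y).det)
    (hF : ContDiffAt ℝ 2 (fun q : (ι → ℝ) × (ι → ℝ) => F q.1 q.2 ^ 2) (x, y)) :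
    IsEulerLagrange (fun q : (ι → ℝ) × (ι → ℝ) => F q.1 q.2 ^ 2) (x, y)
      (y, -(2 • fun α => spray F α x y)) := by
  rw [isEulerLagrange_iff_fundTensor_mulVec hF]
  have h2spray : (2 • fun α => spray F α x y) = (fundTensor F x y)⁻¹ *ᵥ
      fun β => (∑ γ, pdx (pdy (fun x' y' => F x' y' ^ 2) β) γ x y * y γ)
        - pdx (fun x' y' => F x' y' ^ 2) β x y := by
    funext α
    simp only [Pi.smul_apply, spray, Matrix.mulVec, dotProduct]
    ring
  rw [h2spray, Matrix.mulVec_mulVec, Matrix.mul_nonsing_inv _ hdet, Matrix.one_mulVec]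

end Spray

namespace IsFinslerMetric

variable {ι : Type*} [Fintype ι] [DecidableEq ι] {U : Set (ι → ℝ)}
  {F : (ι → ℝ) → (ι → ℝ) → ℝ} {x y : ι → ℝ}

lemma contDiffAt (h : IsFinslerMetric U F) (hx : x ∈ U) (hy : y ≠ 0) :
    ContDiffAt ℝ 2 (fun q : (ι → ℝ) × (ι → ℝ) => F q.1 q.2 ^ 2) (x, y) :=
  (h.smooth.contDiffAt ((h.isOpen.prod isOpen_ne).mem_nhds (Set.mk_mem_prod hx hy))).of_le
    (by norm_cast)

lemma isUnit_det_fundTensor (h : IsFinslerMetric U F) (hx : x ∈ U) (hy : y ≠ 0) :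
    IsUnit (fundTensor F x y).det :=
  isUnit_iff_ne_zero.mpr (h.posDef x hx y hy).det_pos.ne'

lemma fderiv_apply_zero_self (h : IsFinslerMetric U F) (hx : x ∈ U) (hy : y ≠ 0) :
    fderiv ℝ (fun q : (ι → ℝ) × (ι → ℝ) => F q.1 q.2 ^ 2) (x, y) (0, y) = 2 * F x y ^ 2 := by
  have hray : HasDerivAt (fun c : ℝ => ((x, c • y) : (ι → ℝ) × (ι → ℝ))) (0, y) 1 :=
    (hasDerivAt_const 1 x).prodMk (by simpa using (hasDerivAt_id (1 : ℝ)).smul_const y)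
  have hhom : (fun c : ℝ => F x (c • y) ^ 2) = fun c => c ^ 2 * F x y ^ 2 := by
    funext c
    rw [h.homog x hx, mul_pow, sq_abs]
  have hsq : HasDerivAt (fun c : ℝ => c ^ 2 * F x y ^ 2) (2 * F x y ^ 2) 1 := by
    simpa using (hasDerivAt_pow 2 (1 : ℝ)).mul_const (F x y ^ 2)
  have hdiff : DifferentiableAt ℝ (fun q : (ι → ℝ) × (ι → ℝ) => F q.1 q.2 ^ 2)
      (x, (1 : ℝ) • y) := by
    rw [one_smul]
    exact (h.contDiffAt hx hy).differentiableAt two_ne_zero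
  have hcomp := hdiff.hasFDerivAt.comp_hasDerivAt 1 hray
  simp only [Function.comp_def, hhom] at hcomp
  simpa using hcomp.unique hsq

lemma fderiv_apply_spray_eq_zero (h : IsFinslerMetric U F) (hx : x ∈ U) (hy : y ≠ 0) :
    fderiv ℝ (fun q : (ι → ℝ) × (ι → ℝ) => F q.1 q.2 ^ 2) (x, y)
      (y, -(2 • fun α => spray F α x y)) = 0 := by
  have hEuler : ∀ᶠ q in 𝓝 (x, y), fderiv ℝ (fun q : (ι → ℝ) × (ι → ℝ) => F q.1 q.2 ^ 2) q
      (0, q.2) = 2 * F q.1 q.2 ^ 2 := by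
    filter_upwards [(h.isOpen.prod isOpen_ne).mem_nhds (Set.mk_mem_prod hx hy)] with q hq
    exact h.fderiv_apply_zero_self hq.1 hq.2
  exact IsEulerLagrange.fderiv_apply_eq_zero (h.contDiffAt hx hy) hEuler
    (isEulerLagrange_spray (h.isUnit_det_fundTensor hx hy) (h.contDiffAt hx hy))

end IsFinslerMetric

noncomputable def funLeftCLM {κ ι : Type*} [Finite ι] (e : κ → ι) :
    (ι → ℝ) →L[ℝ] (κ → ℝ) :=
  LinearMap.toContinuousLinearMap (LinearMap.funLeft ℝ ℝ e)

lemma IsFinslerMetric.isEulerLagrange_comp_funLeftCLM {κ ι : Type*} [Fintype κ] [DecidableEq κ]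
    [Fintype ι] {U : Set (κ → ℝ)} {G : (κ → ℝ) → (κ → ℝ) → ℝ} (h : IsFinslerMetric U G)
    (e : κ → ι) {x y v : ι → ℝ} (hx : x ∘ e ∈ U) (hy : y ∘ e ≠ 0)
    (hv : v ∘ e = 2 • fun i => spray G i (x ∘ e) (y ∘ e)) :
    IsEulerLagrange ((fun q : (κ → ℝ) × (κ → ℝ) => G q.1 q.2 ^ 2) ∘
        (funLeftCLM e).prodMap (funLeftCLM e)) (x, y) (y, -v) ∧
      fderiv ℝ ((fun q : (κ → ℝ) × (κ → ℝ) => G q.1 q.2 ^ 2) ∘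
        (funLeftCLM e).prodMap (funLeftCLM e)) (x, y) (y, -v) = 0 := by
  have hp : (funLeftCLM e).prodMap (funLeftCLM e) (x, y) = (x ∘ e, y ∘ e) := rfl
  have hY : (funLeftCLM e).prodMap (funLeftCLM e) (y, -v)
      = (y ∘ e, -(2 • fun i => spray G i (x ∘ e) (y ∘ e))) := by
    rw [← hv]
    rfl
  have hG := h.contDiffAt hx hy
  rw [← hp] at hG
  refine ⟨IsEulerLagrange.comp_prodMap _ hG ?_, ?_⟩
  · rw [hp, hY]
    exact isEulerLagrange_spray (h.isUnit_det_fundTensor hx hy) (h.contDiffAt hx hy)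
  · rw [fderiv_comp_clm_apply _ (hG.differentiableAt two_ne_zero), hp, hY]
    exact h.fderiv_apply_spray_eq_zero hx hy

lemma Pi.single_comp_of_injective {κ ι : Type*} [DecidableEq κ] [DecidableEq ι] {e : κ → ι}
    (he : Function.Injective e) (k : κ) : (Pi.single (e k) 1 : ι → ℝ) ∘ e = Pi.single k 1 := by
  funext k'
  simp [Pi.single_apply, he.eq_iff]

lemma Pi.single_comp_of_forall_ne {κ ι : Type*} [DecidableEq ι] {e : κ → ι} {b : ι}
    (hb : ∀ k, e k ≠ b) : (Pi.single b 1 : ι → ℝ) ∘ e = 0 := by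
  funext k
  simp [hb k]

lemma nonlinConn_eq_of_spray_eventuallyEq {κ ι : Type*} [Fintype κ] [DecidableEq κ] [Fintype ι]
    [DecidableEq ι] {F : (ι → ℝ) → (ι → ℝ) → ℝ} {G : (κ → ℝ) → (κ → ℝ) → ℝ} {e : κ → ι}
    (he : Function.Injective e) {α : ι} {a : κ} {x y : ι → ℝ}
    (h : ∀ᶠ y' in 𝓝 y, spray F α x y' = spray G a (x ∘ e) (y' ∘ e)) (β : ι) :
    nonlinConn F α β x y = fderiv ℝ (spray G a (x ∘ e)) (y ∘ e) (Pi.single β 1 ∘ e) := by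
  have hfun : spray F α x =ᶠ[𝓝 y] spray G a (x ∘ e) ∘ funLeftCLM e := h
  change fderiv ℝ (spray F α x) y (Pi.single β 1) = _
  rw [hfun.fderiv_eq, fderiv_comp_clm_of_surjective _ he.surjective_comp_right]
  rfl

namespace IsMinkowskianProduct

variable {m n : ℕ} {U₁ : Set (Fin m → ℝ)} {U₂ : Set (Fin n → ℝ)}
  {F₁ : (Fin m → ℝ) → (Fin m → ℝ) → ℝ} {F₂ : (Fin n → ℝ) → (Fin n → ℝ) → ℝ}
  {f : ℝ → ℝ → ℝ} {F : (Fin m ⊕ Fin n → ℝ) → (Fin m ⊕ Fin n → ℝ) → ℝ}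
  {x y : Fin m ⊕ Fin n → ℝ}

lemma sq_eq (h : IsMinkowskianProduct U₁ U₂ F₁ F₂ f F) (x y : Fin m ⊕ Fin n → ℝ) :
    F x y ^ 2 = f (F₁ (x ∘ Sum.inl) (y ∘ Sum.inl) ^ 2) (F₂ (x ∘ Sum.inr) (y ∘ Sum.inr) ^ 2) := by
  rw [h.F_def, Real.sq_sqrt
    (h.f_nonneg _ (Set.mem_Ici.2 (sq_nonneg _)) _ (Set.mem_Ici.2 (sq_nonneg _)))]

lemma spray_eq_sumElim (h : IsMinkowskianProduct U₁ U₂ F₁ F₂ f F)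
    (hx₁ : x ∘ Sum.inl ∈ U₁) (hx₂ : x ∘ Sum.inr ∈ U₂)
    (hy₁ : y ∘ Sum.inl ≠ 0) (hy₂ : y ∘ Sum.inr ≠ 0) :
    (fun α => spray F α x y) = Sum.elim (fun i => spray F₁ i (x ∘ Sum.inl) (y ∘ Sum.inl))
      (fun i => spray F₂ i (x ∘ Sum.inr) (y ∘ Sum.inr)) := by
  set v := Sum.elim (2 • fun i => spray F₁ i (x ∘ Sum.inl) (y ∘ Sum.inl))
    (2 • fun i => spray F₂ i (x ∘ Sum.inr) (y ∘ Sum.inr))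
  obtain ⟨hEL₁, hcons₁⟩ := h.finsler₁.isEulerLagrange_comp_funLeftCLM Sum.inl hx₁ hy₁
    (v := v) rfl
  obtain ⟨hEL₂, hcons₂⟩ := h.finsler₂.isEulerLagrange_comp_funLeftCLM Sum.inr hx₂ hy₂
    (v := v) rfl
  have hφ : ContDiffAt ℝ 2 (fun s : ℝ × ℝ => f s.1 s.2)
      (F₁ (x ∘ Sum.inl) (y ∘ Sum.inl) ^ 2, F₂ (x ∘ Sum.inr) (y ∘ Sum.inr) ^ 2) :=
    (h.f_smooth.contDiffAt (prod_mem_nhds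
      (Ioi_mem_nhds (pow_pos (h.finsler₁.pos _ hx₁ _ hy₁) 2))
      (Ioi_mem_nhds (pow_pos (h.finsler₂.pos _ hx₂ _ hy₂) 2)))).of_le (by norm_cast)
  have hEL := IsEulerLagrange.comp_prodMk hφ
    ((h.finsler₁.contDiffAt hx₁ hy₁).comp (x, y) (ContinuousLinearMap.contDiff _).contDiffAt)
    ((h.finsler₂.contDiffAt hx₂ hy₂).comp (x, y) (ContinuousLinearMap.contDiff _).contDiffAt)
    hEL₁ hEL₂ hcons₁ hcons₂
  have hF : (fun q : (Fin m ⊕ Fin n → ℝ) × (Fin m ⊕ Fin n → ℝ) => F q.1 q.2 ^ 2) = fun q =>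
      f (F₁ (q.1 ∘ Sum.inl) (q.2 ∘ Sum.inl) ^ 2) (F₂ (q.1 ∘ Sum.inr) (q.2 ∘ Sum.inr) ^ 2) :=
    funext fun q => h.sq_eq q.1 q.2
  have hxy : x ∈ {x : Fin m ⊕ Fin n → ℝ | x ∘ Sum.inl ∈ U₁ ∧ x ∘ Sum.inr ∈ U₂} := ⟨hx₁, hx₂⟩
  have hy : y ≠ 0 := fun h0 => hy₁ (by rw [h0]; rfl)
  funext α
  rw [spray_eq_of_isEulerLagrange (h.finsler.isUnit_det_fundTensor hxy hy)
    (h.finsler.contDiffAt hxy hy) (hF ▸ hEL) α]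
  cases α <;> simp [v]

end IsMinkowskianProduct

/-- The Cartan nonlinear connection coefficients of a Minkowskian product Finsler
metric split: `Γ^i_j = Γ₁^i_j`, `Γ^{i'}_{j'} = Γ₂^{i'}_{j'}`, and the mixed
coefficients vanish. -/
theorem nonlinConn_of_minkowskian_product {m n : ℕ}
    (U₁ : Set (Fin m → ℝ)) (U₂ : Set (Fin n → ℝ))
    (F₁ : (Fin m → ℝ) → (Fin m → ℝ) → ℝ) (F₂ : (Fin n → ℝ) → (Fin n → ℝ) → ℝ)
    (f : ℝ → ℝ → ℝ) (F : (Fin m ⊕ Fin n → ℝ) → (Fin m ⊕ Fin n → ℝ) → ℝ)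
    (hprod : IsMinkowskianProduct U₁ U₂ F₁ F₂ f F) :
    ∀ x : Fin m ⊕ Fin n → ℝ, (x ∘ Sum.inl) ∈ U₁ → (x ∘ Sum.inr) ∈ U₂ →
    ∀ y : Fin m ⊕ Fin n → ℝ, (y ∘ Sum.inl) ≠ 0 → (y ∘ Sum.inr) ≠ 0 →
      (∀ i j : Fin m,
        nonlinConn F (Sum.inl i) (Sum.inl j) x y =
          nonlinConn F₁ i j (x ∘ Sum.inl) (y ∘ Sum.inl)) ∧
      (∀ i' j' : Fin n,
        nonlinConn F (Sum.inr i') (Sum.inr j') x y =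
          nonlinConn F₂ i' j' (x ∘ Sum.inr) (y ∘ Sum.inr)) ∧
      (∀ (i' : Fin n) (j : Fin m), nonlinConn F (Sum.inr i') (Sum.inl j) x y = 0) ∧
      (∀ (i : Fin m) (j' : Fin n), nonlinConn F (Sum.inl i) (Sum.inr j') x y = 0) := by
  intro x hx₁ hx₂ y hy₁ hy₂
  have hsplit : ∀ᶠ y' in 𝓝 y, (fun α => spray F α x y') =
      Sum.elim (fun i => spray F₁ i (x ∘ Sum.inl) (y' ∘ Sum.inl))
        (fun i => spray F₂ i (x ∘ Sum.inr) (y' ∘ Sum.inr)) := by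
    filter_upwards [(isOpen_ne.preimage (funLeftCLM Sum.inl).continuous).mem_nhds hy₁,
      (isOpen_ne.preimage (funLeftCLM Sum.inr).continuous).mem_nhds hy₂] with y' hy'₁ hy'₂
    exact hprod.spray_eq_sumElim hx₁ hx₂ hy'₁ hy'₂
  have hΓ₁ (i : Fin m) := nonlinConn_eq_of_spray_eventuallyEq Sum.inl_injective
    (hsplit.mono fun y' hy' => congrFun hy' (Sum.inl i))
  have hΓ₂ (i : Fin n) := nonlinConn_eq_of_spray_eventuallyEq Sum.inr_injective
    (hsplit.mono fun y' hy' => congrFun hy' (Sum.inr i))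
  refine ⟨fun i j => ?_, fun i j => ?_, fun i j => ?_, fun i j => ?_⟩
  · rw [hΓ₁, Pi.single_comp_of_injective Sum.inl_injective]
    rfl
  · rw [hΓ₂, Pi.single_comp_of_injective Sum.inr_injective]
    rfl
  · rw [hΓ₂, Pi.single_comp_of_forall_ne fun _ => Sum.inr_ne_inl, map_zero]
  · rw [hΓ₁, Pi.single_comp_of_forall_ne fun _ => Sum.inl_ne_inr, map_zero]
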